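/- arXiv:2208.05766 — 7 statements merged into one kernel-verified Lean document; each statement's English description precedes it below -/
import Mathlib

section
/- Let n ≥ 1, let m₁,…,m_n be positive integers, let K, L, p, q ∈ ℕⁿ be multi-indices with p_k ≤ K_k and q_k ≤ L_k for every k and with Σ_{s=1}^n (K_s + L_s)/(2m_s) = 1, and let 0 < c ≤ C be reals. Then there exist constants c' > 0 and C' > 0 such that: for every α ∈ ℂⁿ with α_k ≠ 0 for all k and c·|α_1|^(2m_1) ≤ |α_k|^(2m_k) ≤ C·|α_1|^(2m_1) for all k, and for every real ε > 0, setting τ_k := |α_k|·(ε/|α_k|^(2m_k))^(1/2), one has c'·(|α_1|^(2m_1)/ε)^(1 − (|p|+|q|)/2) ≤ ε^(-1) · ∏_{k=1}^n |α_k|^((K_k − p_k) + (L_k − q_k)) · τ_k^(p_k + q_k) ≤ C'·(|α_1|^(2m_1)/ε)^(1 − (|p|+|q|)/2), where |p| := Σ_k p_k and |q| := Σ_k q_k. -/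
/-- The central two-sided estimate in the proof of Lemma 3.2: for the weight-one monomial
`P(z) = z^K conj(z)^L`, the scaled mixed derivative
`ε⁻¹ ∏_k |α_k|^((K_k - p_k)+(L_k - q_k)) τ_k^(p_k+q_k)` is comparable to
`(|α_1|^(2m_1)/ε)^(1 - (|p|+|q|)/2)`. -/
theorem weight_one_monomial_two_sided_estimate (n : ℕ) (hn : 1 ≤ n)
    (m : Fin n → ℕ) (hm : ∀ k, 0 < m k)
    (K L p q : Fin n → ℕ) (hp : ∀ k, p k ≤ K k) (hq : ∀ k, q k ≤ L k)
    (hw : (∑ s, ((K s + L s : ℝ) / (2 * (m s : ℝ)))) = 1)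
    (c C : ℝ) (hc : 0 < c) (hcC : c ≤ C) :
    ∃ c' C' : ℝ, 0 < c' ∧ 0 < C' ∧
      ∀ α : Fin n → ℂ, (∀ k, α k ≠ 0) →
      (∀ k, c * ‖α ⟨0, hn⟩‖ ^ (2 * m ⟨0, hn⟩) ≤ ‖α k‖ ^ (2 * m k) ∧
            ‖α k‖ ^ (2 * m k) ≤ C * ‖α ⟨0, hn⟩‖ ^ (2 * m ⟨0, hn⟩)) →
      ∀ ε : ℝ, 0 < ε →
      ∀ τ : Fin n → ℝ,
        (∀ k, τ k = ‖α k‖ *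
            (ε / ‖α k‖ ^ (2 * m k)) ^ ((1 : ℝ) / 2)) →
        c' * (‖α ⟨0, hn⟩‖ ^ (2 * m ⟨0, hn⟩) / ε) ^
            (1 - (((∑ k, p k) + (∑ k, q k) : ℕ) : ℝ) / 2) ≤
          ε⁻¹ * ∏ k, (‖α k‖ ^ ((K k - p k) + (L k - q k)) *
            (τ k) ^ (p k + q k)) ∧
        ε⁻¹ * ∏ k, (‖α k‖ ^ ((K k - p k) + (L k - q k)) *
            (τ k) ^ (p k + q k)) ≤
          C' * (‖α ⟨0, hn⟩‖ ^ (2 * m ⟨0, hn⟩) / ε) ^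
            (1 - (((∑ k, p k) + (∑ k, q k) : ℕ) : ℝ) / 2) := by
  have hC : (0:ℝ) < C := hc.trans_le hcC
  set s : ℕ := (∑ k, p k) + (∑ k, q k) with hs
  set σ : ℝ := (s : ℝ) / 2 with hσ
  refine ⟨c * C ^ (-σ), C * c ^ (-σ),
    mul_pos hc (Real.rpow_pos_of_pos hC _),
    mul_pos hC (Real.rpow_pos_of_pos hc _), ?_⟩
  intro α hα hbd ε hε τ hτ
  set A : Fin n → ℝ := fun k => ‖α k‖ with hA
  have hApos : ∀ k, 0 < A k := fun k => by
    simpa [hA] using (norm_pos_iff.mpr (hα k))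
  have hAk : ∀ k, ‖α k‖ = A k := fun _ => rfl
  set r : ℝ := A ⟨0, hn⟩ ^ (2 * m ⟨0, hn⟩) with hrdef
  have hr : 0 < r := pow_pos (hApos _) _
  set x : ℝ := r / ε with hxdef
  have hxpos : 0 < x := div_pos hr hε
  set w : Fin n → ℝ := fun k => ((K k + L k : ℕ) : ℝ) / (2 * (m k : ℝ)) with hwdef
  set t : Fin n → ℝ := fun k => ((p k + q k : ℕ) : ℝ) / 2 with htdef
  simp only [hAk] at hbd hτ ⊢
  have hw0 : ∀ k, 0 ≤ w k := fun k => by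
    have := hm k; positivity
  have ht0 : ∀ k, 0 ≤ t k := fun k => by positivity
  have hw' : ∑ k, w k = 1 := by
    simp only [hwdef]
    push_cast
    exact hw
  have ht_sum : ∑ k, t k = σ := by
    simp only [htdef, hσ, hs]
    rw [← Finset.sum_div]
    congr 1
    push_cast
    rw [Finset.sum_add_distrib]
  -- rewrite product
  have hprod : (∏ k, (A k ^ ((K k - p k) + (L k - q k)) * (τ k) ^ (p k + q k)))
      = (∏ k, (A k ^ (2 * m k)) ^ (w k)) *
        (∏ k, (ε / A k ^ (2 * m k)) ^ (t k)) := by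
    rw [← Finset.prod_mul_distrib]
    refine Finset.prod_congr rfl fun k _ => ?_
    have hbase : (0:ℝ) ≤ ε / A k ^ (2 * m k) := by positivity
    have hmk : (m k : ℝ) ≠ 0 := Nat.cast_ne_zero.mpr (hm k).ne'
    have hτk : τ k ^ (p k + q k)
        = A k ^ (p k + q k) * (ε / A k ^ (2 * m k)) ^ (t k) := by
      rw [hτ k, mul_pow, ← Real.rpow_natCast ((ε / A k ^ (2 * m k)) ^ ((1:ℝ)/2)) (p k + q k),
        ← Real.rpow_mul hbase]
      simp only [htdef]
      congr 1
      push_cast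
      ring_nf
    have e1 : (A k ^ (2 * m k)) ^ (w k) = A k ^ (K k + L k) := by
      rw [← Real.rpow_natCast (A k) (2 * m k), ← Real.rpow_mul (hApos k).le,
        ← Real.rpow_natCast (A k) (K k + L k)]
      congr 1
      simp only [hwdef]
      push_cast
      field_simp
    have hexp : (K k - p k) + (L k - q k) + (p k + q k) = K k + L k := by
      have := hp k; have := hq k; omega
    rw [hτk, e1, ← mul_assoc, ← pow_add, hexp]
  -- bounds on first product
  have hcr : (0:ℝ) < c * r := mul_pos hc hr
  have hCr : (0:ℝ) < C * r := mul_pos hC hr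
  have hg_lower : c * r ≤ ∏ k, (A k ^ (2 * m k)) ^ (w k) := by
    calc c * r = (c * r) ^ (∑ k, w k) := by rw [hw', Real.rpow_one]
      _ = ∏ k, (c * r) ^ (w k) := Real.rpow_sum_of_pos hcr w Finset.univ
      _ ≤ ∏ k, (A k ^ (2 * m k)) ^ (w k) :=
        Finset.prod_le_prod (fun k _ => Real.rpow_nonneg hcr.le _)
          (fun k _ => Real.rpow_le_rpow hcr.le (hbd k).1 (hw0 k))
  have hg_upper : (∏ k, (A k ^ (2 * m k)) ^ (w k)) ≤ C * r := by
    calc (∏ k, (A k ^ (2 * m k)) ^ (w k)) ≤ ∏ k, (C * r) ^ (w k) :=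
        Finset.prod_le_prod (fun k _ => Real.rpow_nonneg (by positivity) _)
          (fun k _ => Real.rpow_le_rpow (by positivity) (hbd k).2 (hw0 k))
      _ = (C * r) ^ (∑ k, w k) := (Real.rpow_sum_of_pos hCr w Finset.univ).symm
      _ = C * r := by rw [hw', Real.rpow_one]
  -- bounds on second product
  have hh_lower : (ε / (C * r)) ^ σ ≤ ∏ k, (ε / A k ^ (2 * m k)) ^ (t k) := by
    calc (ε / (C * r)) ^ σ = (ε / (C * r)) ^ (∑ k, t k) := by rw [ht_sum]
      _ = ∏ k, (ε / (C * r)) ^ (t k) :=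
        Real.rpow_sum_of_pos (div_pos hε hCr) t Finset.univ
      _ ≤ ∏ k, (ε / A k ^ (2 * m k)) ^ (t k) := by
        refine Finset.prod_le_prod (fun k _ => Real.rpow_nonneg (by positivity) _)
          (fun k _ => Real.rpow_le_rpow (by positivity) ?_ (ht0 k))
        have h1 : (0:ℝ) < A k ^ (2 * m k) := pow_pos (hApos k) _
        exact div_le_div_of_nonneg_left hε.le h1 (hbd k).2
  have hh_upper : (∏ k, (ε / A k ^ (2 * m k)) ^ (t k)) ≤ (ε / (c * r)) ^ σ := by
    calc (∏ k, (ε / A k ^ (2 * m k)) ^ (t k)) ≤ ∏ k, (ε / (c * r)) ^ (t k) := by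
            refine Finset.prod_le_prod (fun k _ => Real.rpow_nonneg (by positivity) _)
              (fun k _ => Real.rpow_le_rpow (by positivity) ?_ (ht0 k))
            exact div_le_div_of_nonneg_left hε.le hcr (hbd k).1
      _ = (ε / (c * r)) ^ (∑ k, t k) :=
        (Real.rpow_sum_of_pos (div_pos hε hcr) t Finset.univ).symm
      _ = (ε / (c * r)) ^ σ := by rw [ht_sum]
  -- key algebraic identity
  have key : ∀ a b : ℝ, 0 < a → 0 < b →
      ε⁻¹ * (a * r * (ε / (b * r)) ^ σ) = a * b ^ (-σ) * x ^ (1 - σ) := by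
    intro a b ha hb
    have h1 : ε / (b * r) = (b * x)⁻¹ := by
      rw [hxdef]; field_simp
    have hbx : (0:ℝ) < b * x := mul_pos hb hxpos
    have hbσ : (0:ℝ) < b ^ σ := Real.rpow_pos_of_pos hb _
    have hxσ : (0:ℝ) < x ^ σ := Real.rpow_pos_of_pos hxpos _
    rw [h1, Real.inv_rpow hbx.le, Real.mul_rpow hb.le hxpos.le,
      Real.rpow_neg hb.le, Real.rpow_sub hxpos, Real.rpow_one, hxdef]
    field_simp
  -- combine
  have hPl : c * r * (ε / (C * r)) ^ σ ≤
      ∏ k, (A k ^ ((K k - p k) + (L k - q k)) * (τ k) ^ (p k + q k)) := by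
    rw [hprod]
    exact mul_le_mul hg_lower hh_lower (Real.rpow_nonneg (by positivity) _)
      (le_trans hcr.le hg_lower)
  have hPu : (∏ k, (A k ^ ((K k - p k) + (L k - q k)) * (τ k) ^ (p k + q k))) ≤
      C * r * (ε / (c * r)) ^ σ := by
    rw [hprod]
    exact mul_le_mul hg_upper hh_upper
      (Finset.prod_nonneg fun k _ => Real.rpow_nonneg (by positivity) _) (by positivity)
  constructor
  · calc c * C ^ (-σ) * x ^ (1 - σ) = ε⁻¹ * (c * r * (ε / (C * r)) ^ σ) := (key c C hc hC).symm
      _ ≤ _ := by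
        exact mul_le_mul_of_nonneg_left hPl (inv_nonneg.mpr hε.le)
  · calc ε⁻¹ * ∏ k, (A k ^ ((K k - p k) + (L k - q k)) * (τ k) ^ (p k + q k))
        ≤ ε⁻¹ * (C * r * (ε / (c * r)) ^ σ) :=
          mul_le_mul_of_nonneg_left hPu (inv_nonneg.mpr hε.le)
      _ = C * c ^ (-σ) * x ^ (1 - σ) := key C c hC hc
end

section
/- Let n ≥ 1, let m₁,…,m_n be positive integers, and let K, L, p, q ∈ ℕⁿ be multi-indices with p_k ≤ K_k and q_k ≤ L_k for every k, with Σ_{s=1}^n (K_s + L_s)/(2m_s) = 1 and |p| + |q| > 2, where |p| := Σ_k p_k and |q| := Σ_k q_k. Let (α_j) be a sequence in ℂⁿ with all coordinates of every α_j nonzero and (ε_j) a sequence of positive reals such that there exist constants 0 < c ≤ C with c·|α_{j1}|^(2m_1) ≤ |α_{jk}|^(2m_k) ≤ C·|α_{j1}|^(2m_1) for all j and k, and such that ε_j/|α_{j1}|^(2m_1) → 0. Setting τ_{jk} := |α_{jk}|·(ε_j/|α_{jk}|^(2m_k))^(1/2), the quantity ε_j^(-1) · ∏_{k=1}^n |α_{jk}|^((K_k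 − p_k) + (L_k − q_k)) · τ_{jk}^(p_k + q_k) tends to 0 as j → ∞. -/
/-- Lemma 3.2, first conclusion: scaled mixed derivatives of order `> 2` of the weight-one
monomial `z^K conj(z)^L` tend to `0` along the scaling sequence. -/
theorem weight_one_monomial_high_order_vanishes (n : ℕ) (hn : 1 ≤ n)
    (m : Fin n → ℕ) (hm : ∀ k, 0 < m k)
    (K L p q : Fin n → ℕ) (hp : ∀ k, p k ≤ K k) (hq : ∀ k, q k ≤ L k)
    (hw : (∑ s, ((K s + L s : ℝ) / (2 * (m s : ℝ)))) = 1)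
    (hpq : 2 < (∑ k, p k) + (∑ k, q k))
    (α : ℕ → Fin n → ℂ) (hα : ∀ j k, α j k ≠ 0)
    (ε : ℕ → ℝ) (hε : ∀ j, 0 < ε j)
    (c C : ℝ) (hc : 0 < c) (hcC : c ≤ C)
    (hcomp : ∀ j k, c * ‖α j ⟨0, hn⟩‖ ^ (2 * m ⟨0, hn⟩) ≤
        ‖α j k‖ ^ (2 * m k) ∧
        ‖α j k‖ ^ (2 * m k) ≤ C * ‖α j ⟨0, hn⟩‖ ^ (2 * m ⟨0, hn⟩))
    (hratio : Filter.Tendsto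
        (fun j => ε j / ‖α j ⟨0, hn⟩‖ ^ (2 * m ⟨0, hn⟩))
        Filter.atTop (nhds 0)) :
    Filter.Tendsto (fun j =>
        (ε j)⁻¹ * ∏ k, (‖α j k‖ ^ ((K k - p k) + (L k - q k)) *
          (‖α j k‖ *
            (ε j / ‖α j k‖ ^ (2 * m k)) ^ ((1 : ℝ) / 2)) ^ (p k + q k)))
      Filter.atTop (nhds 0) := by
  set i0 : Fin n := ⟨0, hn⟩ with hi0
  set N : ℕ := (∑ k, p k) + (∑ k, q k) with hNdef
  set δ : ℕ → ℝ := fun j => ε j / ‖α j i0‖ ^ (2 * m i0) with hδ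
  have hC : (0 : ℝ) < C := lt_of_lt_of_le hc hcC
  have hA : ∀ j k, 0 < ‖α j k‖ := fun j k => norm_pos_iff.2 (hα j k)
  have hA2m : ∀ j k, 0 < ‖α j k‖ ^ (2 * m k) := fun j k => pow_pos (hA j k) _
  have hA1 : ∀ j, 0 < ‖α j i0‖ ^ (2 * m i0) := fun j => hA2m j i0
  have hδpos : ∀ j, 0 < δ j := fun j => div_pos (hε j) (hA1 j)
  have hNhalf : (1 : ℝ) < (N : ℝ) / 2 := by
    have h3 : (3 : ℕ) ≤ N := hpq
    have : (3 : ℝ) ≤ (N : ℝ) := by exact_mod_cast h3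
    linarith
  have htpos : (0 : ℝ) < (N : ℝ) / 2 - 1 := by linarith
  -- The key pointwise bound
  have hbound : ∀ j,
      (ε j)⁻¹ * ∏ k, (‖α j k‖ ^ ((K k - p k) + (L k - q k)) *
          (‖α j k‖ *
            (ε j / ‖α j k‖ ^ (2 * m k)) ^ ((1 : ℝ) / 2)) ^ (p k + q k))
        ≤ (C * (c ^ ((N : ℝ) / 2))⁻¹) * δ j ^ ((N : ℝ) / 2 - 1) := by
    intro j
    set a : Fin n → ℝ := fun k => ‖α j k‖ with ha
    set A1 : ℝ := ‖α j i0‖ ^ (2 * m i0) with hA1def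
    have hA1pos : 0 < A1 := hA1 j
    have hapos : ∀ k, 0 < a k := fun k => hA j k
    have hrnonneg : ∀ k, (0 : ℝ) ≤ ε j / a k ^ (2 * m k) :=
      fun k => div_nonneg (hε j).le (hA2m j k).le
    -- rewrite each factor of the product
    have hterm : ∀ k, (a k ^ ((K k - p k) + (L k - q k)) *
        (a k * (ε j / a k ^ (2 * m k)) ^ ((1 : ℝ) / 2)) ^ (p k + q k))
        = (a k ^ (2 * m k)) ^ ((K k + L k : ℝ) / (2 * (m k : ℝ))) *
          (ε j / a k ^ (2 * m k)) ^ (((p k + q k : ℕ) : ℝ) / 2) := by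
      intro k
      have hmk : (0 : ℝ) < (m k : ℝ) := by exact_mod_cast hm k
      have h1 : (a k ^ (2 * m k) : ℝ) ^ ((K k + L k : ℝ) / (2 * (m k : ℝ)))
          = a k ^ (K k + L k) := by
        rw [← Real.rpow_natCast (a k) (2 * m k), ← Real.rpow_mul (hapos k).le,
          ← Real.rpow_natCast (a k) (K k + L k)]
        congr 1
        have hmne : (2 * (m k : ℝ)) ≠ 0 := by linarith
        push_cast
        field_simp
      have h2 : ((ε j / a k ^ (2 * m k)) ^ ((1 : ℝ) / 2)) ^ (p k + q k)
          = (ε j / a k ^ (2 * m k)) ^ (((p k + q k : ℕ) : ℝ) / 2) := by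
        rw [← Real.rpow_natCast ((ε j / a k ^ (2 * m k)) ^ ((1 : ℝ) / 2)) (p k + q k),
          ← Real.rpow_mul (hrnonneg k)]
        ring_nf
      have hexp : (K k - p k) + (L k - q k) + (p k + q k) = K k + L k := by
        have := hp k; have := hq k; omega
      rw [mul_pow, h2, h1, ← mul_assoc, ← pow_add, hexp]
    -- bound each rewritten factor
    have hfac : ∀ k, (a k ^ (2 * m k)) ^ ((K k + L k : ℝ) / (2 * (m k : ℝ))) *
          (ε j / a k ^ (2 * m k)) ^ (((p k + q k : ℕ) : ℝ) / 2)
        ≤ (C * A1) ^ ((K k + L k : ℝ) / (2 * (m k : ℝ))) *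
          (δ j / c) ^ (((p k + q k : ℕ) : ℝ) / 2) := by
      intro k
      have hmk : (0 : ℝ) < (m k : ℝ) := by exact_mod_cast hm k
      have he1 : (0 : ℝ) ≤ (K k + L k : ℝ) / (2 * (m k : ℝ)) := by
        apply div_nonneg _ (by linarith)
        positivity
      have he2 : (0 : ℝ) ≤ ((p k + q k : ℕ) : ℝ) / 2 := by positivity
      have hr : ε j / a k ^ (2 * m k) ≤ δ j / c := by
        have : δ j / c = ε j / (A1 * c) := by rw [hδ, div_div]
        rw [this]
        apply div_le_div_of_nonneg_left (hε j).le (mul_pos hA1pos hc)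
        rw [mul_comm]
        exact (hcomp j k).1
      apply mul_le_mul
      · exact Real.rpow_le_rpow (hA2m j k).le (hcomp j k).2 he1
      · exact Real.rpow_le_rpow (hrnonneg k) hr he2
      · exact Real.rpow_nonneg (hrnonneg k) _
      · exact Real.rpow_nonneg (mul_pos hC hA1pos).le _
    have hεinv : (0 : ℝ) ≤ (ε j)⁻¹ := inv_nonneg.2 (hε j).le
    calc (ε j)⁻¹ * ∏ k, (a k ^ ((K k - p k) + (L k - q k)) *
          (a k * (ε j / a k ^ (2 * m k)) ^ ((1 : ℝ) / 2)) ^ (p k + q k))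
        = (ε j)⁻¹ * ∏ k, ((a k ^ (2 * m k)) ^ ((K k + L k : ℝ) / (2 * (m k : ℝ))) *
            (ε j / a k ^ (2 * m k)) ^ (((p k + q k : ℕ) : ℝ) / 2)) := by
          congr 1; exact Finset.prod_congr rfl fun k _ => hterm k
      _ ≤ (ε j)⁻¹ * ∏ k, ((C * A1) ^ ((K k + L k : ℝ) / (2 * (m k : ℝ))) *
            (δ j / c) ^ (((p k + q k : ℕ) : ℝ) / 2)) := by
          apply mul_le_mul_of_nonneg_left _ hεinv
          apply Finset.prod_le_prod
          · intro k _
            exact mul_nonneg (Real.rpow_nonneg (hA2m j k).le _)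
              (Real.rpow_nonneg (hrnonneg k) _)
          · intro k _; exact hfac k
      _ = (ε j)⁻¹ * ((C * A1) * (δ j / c) ^ ((N : ℝ) / 2)) := by
          rw [Finset.prod_mul_distrib,
            ← Real.rpow_sum_of_pos (mul_pos hC hA1pos) _ Finset.univ,
            ← Real.rpow_sum_of_pos (div_pos (hδpos j) hc) _ Finset.univ, hw, Real.rpow_one]
          congr 2
          rw [hNdef]
          push_cast
          rw [← Finset.sum_div, Finset.sum_add_distrib]
      _ = (C * (c ^ ((N : ℝ) / 2))⁻¹) * δ j ^ ((N : ℝ) / 2 - 1) := by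
          have hε' : ε j = δ j * A1 := by
            rw [hδ]
            field_simp
            exact (mul_div_cancel_right₀ _ (hA1 j).ne').symm
          rw [Real.div_rpow (hδpos j).le hc.le, hε',
            Real.rpow_sub (hδpos j), Real.rpow_one]
          have hδne : δ j ≠ 0 := (hδpos j).ne'
          have hcne : c ^ ((N : ℝ) / 2) ≠ 0 := (Real.rpow_pos_of_pos hc _).ne'
          field_simp
  -- nonnegativity
  have hnonneg : ∀ j, (0 : ℝ) ≤
      (ε j)⁻¹ * ∏ k, (‖α j k‖ ^ ((K k - p k) + (L k - q k)) *
          (‖α j k‖ *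
            (ε j / ‖α j k‖ ^ (2 * m k)) ^ ((1 : ℝ) / 2)) ^ (p k + q k)) := by
    intro j
    apply mul_nonneg (inv_nonneg.2 (hε j).le)
    apply Finset.prod_nonneg
    intro k _
    exact mul_nonneg (pow_nonneg (hA j k).le _)
      (pow_nonneg (mul_nonneg (hA j k).le
        (Real.rpow_nonneg (div_nonneg (hε j).le (hA2m j k).le) _)) _)
  -- the bounding sequence tends to 0
  have hgtend : Filter.Tendsto (fun j => (C * (c ^ ((N : ℝ) / 2))⁻¹) * δ j ^ ((N : ℝ) / 2 - 1))
      Filter.atTop (nhds 0) := by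
    have h1 : Filter.Tendsto (fun j => δ j ^ ((N : ℝ) / 2 - 1)) Filter.atTop (nhds 0) := by
      have h2 := hratio.rpow_const (p := (N : ℝ) / 2 - 1) (Or.inr htpos.le)
      rwa [Real.zero_rpow htpos.ne'] at h2
    have h3 := h1.const_mul (C * (c ^ ((N : ℝ) / 2))⁻¹)
    simpa using h3
  exact squeeze_zero hnonneg hbound hgtend
end

section
/- Let n ≥ 1, let m₁,…,m_n be positive integers, and let K, L, p, q ∈ ℕⁿ be multi-indices with p_k ≤ K_k and q_k ≤ L_k for every k, with Σ_{s=1}^n (K_s + L_s)/(2m_s) = 1 and |p| = |q| = 1 (i.e. exactly one p_k equals 1, exactly one q_l equals 1, all other entries 0). Then for all reals 0 < c ≤ C there is a constant C' > 0 such that for every α ∈ ℂⁿ with all coordinates nonzero satisfying c·|α_1|^(2m_1) ≤ |α_k|^(2m_k) ≤ C·|α_1|^(2m_1) for all k, and every ε > 0, setting τ_k := |α_k|·(ε/|α_k|^(2m_k))^(1/2), one has ε^(-1) · ∏_{k=1}^n |α_k|^((K_k − p_k) + (L_k − q_k)) · τ_k^(p_k + q_k) ≤ C'. -/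
/-- Lemma 3.2, boundedness conclusion for second-order mixed derivatives (`|p| = |q| = 1`)
of the weight-one monomial `z^K conj(z)^L` under the scaling. -/
theorem weight_one_monomial_second_order_bounded (n : ℕ) (hn : 1 ≤ n)
    (m : Fin n → ℕ) (hm : ∀ k, 0 < m k)
    (K L p q : Fin n → ℕ) (hp : ∀ k, p k ≤ K k) (hq : ∀ k, q k ≤ L k)
    (hw : (∑ s, ((K s + L s : ℝ) / (2 * (m s : ℝ)))) = 1)
    (hpsum : (∑ k, p k) = 1) (hqsum : (∑ k, q k) = 1) :
    ∀ c C : ℝ, 0 < c → c ≤ C →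
      ∃ C' : ℝ, 0 < C' ∧
        ∀ α : Fin n → ℂ, (∀ k, α k ≠ 0) →
        (∀ k, c * ‖α ⟨0, hn⟩‖ ^ (2 * m ⟨0, hn⟩) ≤
              ‖α k‖ ^ (2 * m k) ∧
              ‖α k‖ ^ (2 * m k) ≤
              C * ‖α ⟨0, hn⟩‖ ^ (2 * m ⟨0, hn⟩)) →
        ∀ ε : ℝ, 0 < ε →
          ε⁻¹ * ∏ k, (‖α k‖ ^ ((K k - p k) + (L k - q k)) *
            (‖α k‖ *
              (ε / ‖α k‖ ^ (2 * m k)) ^ ((1 : ℝ) / 2)) ^ (p k + q k)) ≤ C' := by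
  intro c C hc hcC
  have hC : 0 < C := lt_of_lt_of_le hc hcC
  refine ⟨C / c, div_pos hC hc, ?_⟩
  intro α hα hcomp ε hε
  set a : Fin n → ℝ := fun k => ‖α k‖ with ha_def
  have ha : ∀ k, 0 < a k := fun k => norm_pos_iff.mpr (hα k)
  set A : ℝ := a ⟨0, hn⟩ ^ (2 * m ⟨0, hn⟩) with hA_def
  have hA : 0 < A := pow_pos (ha _) _
  -- exponents
  set e : Fin n → ℝ := fun k => (K k + L k : ℝ) / (2 * m k) with he_def
  set r : Fin n → ℝ := fun k => (p k + q k : ℝ) / 2 with hr_def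
  have he0 : ∀ k, 0 ≤ e k := fun k => by positivity
  have hr0 : ∀ k, 0 ≤ r k := fun k => by positivity
  have hX : ∀ k, (0:ℝ) < a k ^ (2 * m k) := fun k => pow_pos (ha k) _
  -- per-factor rewrite
  have key : ∀ k, a k ^ ((K k - p k) + (L k - q k)) *
      (a k * (ε / a k ^ (2 * m k)) ^ ((1:ℝ)/2)) ^ (p k + q k)
      = (a k ^ (2 * m k)) ^ (e k) * (ε ^ (r k) * ((a k ^ (2 * m k)) ^ (r k))⁻¹) := by
    intro k
    have hx := ha k
    have hXk := hX k
    have h2m : (2 * (m k) : ℝ) ≠ 0 := by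
      have := hm k; positivity
    have h1 : ((ε / a k ^ (2 * m k)) ^ ((1:ℝ)/2)) ^ (p k + q k)
        = ε ^ (r k) * ((a k ^ (2 * m k)) ^ (r k))⁻¹ := by
      rw [← Real.rpow_natCast ((ε / a k ^ (2 * m k)) ^ ((1:ℝ)/2)) (p k + q k),
        ← Real.rpow_mul (by positivity),
        Real.div_rpow hε.le hXk.le]
      rw [hr_def]
      push_cast
      ring_nf
    have h2 : (a k : ℝ) ^ ((K k - p k) + (L k - q k)) * a k ^ (p k + q k)
        = (a k ^ (2 * m k)) ^ (e k) := by
      rw [← pow_add]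
      have hexp : (K k - p k) + (L k - q k) + (p k + q k) = K k + L k := by
        have := hp k; have := hq k; omega
      rw [hexp]
      have hmul : ((2 * m k : ℕ) : ℝ) * e k = ((K k + L k : ℕ) : ℝ) := by
        rw [he_def]; push_cast; field_simp [(Nat.cast_pos.mpr (hm k)).ne']
      rw [← Real.rpow_natCast (a k) (2 * m k), ← Real.rpow_mul hx.le, hmul,
        Real.rpow_natCast]
    calc a k ^ ((K k - p k) + (L k - q k)) *
          (a k * (ε / a k ^ (2 * m k)) ^ ((1:ℝ)/2)) ^ (p k + q k)
        = (a k ^ ((K k - p k) + (L k - q k)) * a k ^ (p k + q k)) *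
          ((ε / a k ^ (2 * m k)) ^ ((1:ℝ)/2)) ^ (p k + q k) := by
          rw [mul_pow]; ring
      _ = (a k ^ (2 * m k)) ^ (e k) * (ε ^ (r k) * ((a k ^ (2 * m k)) ^ (r k))⁻¹) := by
          rw [h1, h2]
  rw [Finset.prod_congr rfl (fun k _ => key k)]
  rw [Finset.prod_mul_distrib, Finset.prod_mul_distrib]
  -- sum of r is 1
  have hrsum : (∑ k, r k) = 1 := by
    rw [hr_def]
    rw [← Finset.sum_div]
    have : (∑ i, ((p i : ℝ) + (q i : ℝ))) = ((∑ i, p i : ℕ) : ℝ) + ((∑ i, q i : ℕ) : ℝ) := by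
      push_cast [Finset.sum_add_distrib]; ring
    rw [this, hpsum, hqsum]; norm_num
  -- middle product equals ε
  have hGmid : (∏ k, ε ^ (r k)) = ε := by
    rw [← Real.rpow_sum_of_pos hε, hrsum, Real.rpow_one]
  rw [hGmid]
  -- bound first product
  have hF : (∏ k, (a k ^ (2 * m k)) ^ (e k)) ≤ C * A := by
    calc (∏ k, (a k ^ (2 * m k)) ^ (e k)) ≤ ∏ k, (C * A) ^ (e k) := by
          apply Finset.prod_le_prod
          · intro k _; positivity
          · intro k _
            exact Real.rpow_le_rpow (hX k).le ((hcomp k).2) (he0 k)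
      _ = (C * A) ^ (∑ k, e k) := (Real.rpow_sum_of_pos (by positivity) e Finset.univ).symm
      _ = C * A := by
          rw [show (∑ k, e k) = 1 from hw, Real.rpow_one]
  -- bound inverse product
  have hH : (∏ k, ((a k ^ (2 * m k)) ^ (r k))⁻¹) ≤ (c * A)⁻¹ := by
    have hcA : (0:ℝ) < c * A := by positivity
    calc (∏ k, ((a k ^ (2 * m k)) ^ (r k))⁻¹) ≤ ∏ k, ((c * A) ^ (r k))⁻¹ := by
          apply Finset.prod_le_prod
          · intro k _; positivity
          · intro k _
            apply inv_anti₀ (by positivity)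
            exact Real.rpow_le_rpow hcA.le ((hcomp k).1) (hr0 k)
      _ = ((c * A) ^ (∑ k, r k))⁻¹ := by
          rw [Real.rpow_sum_of_pos hcA, ← Finset.prod_inv_distrib]
      _ = (c * A)⁻¹ := by rw [hrsum, Real.rpow_one]
  have hHpos : (0:ℝ) ≤ ∏ k, ((a k ^ (2 * m k)) ^ (r k))⁻¹ :=
    Finset.prod_nonneg fun k _ => by positivity
  have hbound : (∏ k, (a k ^ (2 * m k)) ^ (e k)) *
      (∏ k, ((a k ^ (2 * m k)) ^ (r k))⁻¹) ≤ (C * A) * (c * A)⁻¹ :=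
    mul_le_mul hF hH hHpos (by positivity)
  have hfin : (C * A) * (c * A)⁻¹ = C / c := by
    field_simp
  calc ε⁻¹ * ((∏ k, (a k ^ (2 * m k)) ^ (e k)) * (ε *
        ∏ k, ((a k ^ (2 * m k)) ^ (r k))⁻¹))
      = (∏ k, (a k ^ (2 * m k)) ^ (e k)) *
        (∏ k, ((a k ^ (2 * m k)) ^ (r k))⁻¹) := by
        field_simp
    _ ≤ (C * A) * (c * A)⁻¹ := hbound
    _ = C / c := hfin
end

section
/- Let n ≥ 1, let m₁,…,m_n be positive integers, and let K, L, p, q ∈ ℕⁿ be multi-indices with p_k ≤ K_k and q_k ≤ L_k for every k, with Σ_{s=1}^n (K_s + L_s)/(2m_s) > 1 and |p| + |q| ≥ 2. Let (α_j) be a sequence in ℂⁿ with all coordinates of every α_j nonzero, converging to 0, and (ε_j) a sequence of positive reals such that there exist constants 0 < c ≤ C with c·|α_{j1}|^(2m_1) ≤ |α_{jk}|^(2m_k) ≤ C·|α_{j1}|^(2m_1) for all j and k, and such that ε_j/|α_{j1}|^(2m_1) → 0. Setting τ_{jk} := |α_{jk}|·(ε_j/|α_{jk}|^(2m_k))^(1/2),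 the quantity ε_j^(-1) · ∏_{k=1}^n |α_{jk}|^((K_k − p_k) + (L_k − q_k)) · τ_{jk}^(p_k + q_k) tends to 0 as j → ∞. -/
open Filter Real

lemma factor_le {a A e c C : ℝ} (ha : 0 < a) (hA : 0 < A) (he : 0 < e) (hc : 0 < c) (hC : 0 < C)
    {mk Kk Lk pk qk : ℕ} (hmk : 0 < mk) (hpk : pk ≤ Kk) (hqk : qk ≤ Lk)
    (h1 : c * A ≤ a ^ (2 * mk)) (h2 : a ^ (2 * mk) ≤ C * A) :
    a ^ (Kk - pk + (Lk - qk)) * (a * (e / a ^ (2 * mk)) ^ ((1 : ℝ) / 2)) ^ (pk + qk)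
      ≤ (C * A) ^ ((Kk + Lk : ℝ) / (2 * mk)) * (e / A / c) ^ ((pk + qk : ℝ) / 2) := by
  have h2m : (0:ℝ) < a ^ (2 * mk) := pow_pos ha _
  have ht : 0 < e / a ^ (2 * mk) := div_pos he h2m
  have e1 : ((e / a ^ (2 * mk)) ^ ((1:ℝ)/2)) ^ (pk + qk)
      = (e / a ^ (2 * mk)) ^ (((pk + qk : ℕ) : ℝ) / 2) := by
    rw [← Real.rpow_natCast ((e / a ^ (2 * mk)) ^ ((1:ℝ)/2)) (pk + qk),
      ← Real.rpow_mul ht.le]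
    ring_nf
  have elhs : a ^ (Kk - pk + (Lk - qk)) *
      (a * (e / a ^ (2 * mk)) ^ ((1 : ℝ) / 2)) ^ (pk + qk)
      = a ^ (Kk + Lk) * (e / a ^ (2 * mk)) ^ (((pk + qk : ℕ) : ℝ) / 2) := by
    rw [mul_pow, e1, ← mul_assoc, ← pow_add]
    congr 2
    omega
  rw [elhs]
  have e2 : (a : ℝ) ^ (Kk + Lk) = (a ^ (2 * mk)) ^ ((Kk + Lk : ℝ) / (2 * mk)) := by
    rw [← Real.rpow_natCast a (2 * mk), ← Real.rpow_mul ha.le,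
      ← Real.rpow_natCast a (Kk + Lk)]
    congr 1
    have : (mk : ℝ) ≠ 0 := Nat.cast_ne_zero.mpr hmk.ne'
    field_simp
    push_cast
    ring
  rw [e2]
  have hb1 : (a ^ (2 * mk)) ^ ((Kk + Lk : ℝ) / (2 * mk)) ≤ (C * A) ^ ((Kk + Lk : ℝ) / (2 * mk)) := by
    apply Real.rpow_le_rpow h2m.le h2
    positivity
  have hb2 : (e / a ^ (2 * mk)) ^ (((pk + qk : ℕ) : ℝ) / 2) ≤ (e / A / c) ^ ((pk + qk : ℝ) / 2) := by
    have : e / a ^ (2 * mk) ≤ e / A / c := by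
      rw [div_div, mul_comm A c]
      exact div_le_div_of_nonneg_left he.le (by positivity) h1
    have := Real.rpow_le_rpow ht.le this (by positivity : (0:ℝ) ≤ ((pk + qk : ℕ) : ℝ) / 2)
    simpa using this
  exact mul_le_mul hb1 hb2 (by positivity) (by positivity)

/-- Lemma 3.3: for a monomial `z^K conj(z)^L` of weight `> 1`, all scaled mixed derivatives
of order `≥ 2` tend to `0` along the scaling sequence. -/
theorem higher_weight_monomial_derivatives_vanish (n : ℕ) (hn : 1 ≤ n)
    (m : Fin n → ℕ) (hm : ∀ k, 0 < m k)
    (K L p q : Fin n → ℕ) (hp : ∀ k, p k ≤ K k) (hq : ∀ k, q k ≤ L k)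
    (hw : 1 < (∑ s, ((K s + L s : ℝ) / (2 * (m s : ℝ)))))
    (hpq : 2 ≤ (∑ k, p k) + (∑ k, q k))
    (α : ℕ → Fin n → ℂ) (hα : ∀ j k, α j k ≠ 0)
    (hα0 : Filter.Tendsto α Filter.atTop (nhds 0))
    (ε : ℕ → ℝ) (hε : ∀ j, 0 < ε j)
    (c C : ℝ) (hc : 0 < c) (hcC : c ≤ C)
    (hcomp : ∀ j k, c * ‖α j ⟨0, hn⟩‖ ^ (2 * m ⟨0, hn⟩) ≤
        ‖α j k‖ ^ (2 * m k) ∧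
        ‖α j k‖ ^ (2 * m k) ≤ C * ‖α j ⟨0, hn⟩‖ ^ (2 * m ⟨0, hn⟩))
    (hratio : Filter.Tendsto
        (fun j => ε j / ‖α j ⟨0, hn⟩‖ ^ (2 * m ⟨0, hn⟩))
        Filter.atTop (nhds 0)) :
    Filter.Tendsto (fun j =>
        (ε j)⁻¹ * ∏ k, (‖α j k‖ ^ ((K k - p k) + (L k - q k)) *
          (‖α j k‖ *
            (ε j / ‖α j k‖ ^ (2 * m k)) ^ ((1 : ℝ) / 2)) ^ (p k + q k)))
      Filter.atTop (nhds 0) := by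
  have hC : 0 < C := lt_of_lt_of_le hc hcC
  set i0 : Fin n := ⟨0, hn⟩ with hi0
  set d : ℝ := ∑ s, ((K s + L s : ℝ) / (2 * (m s : ℝ))) with hd
  set N : ℕ := (∑ k, p k) + (∑ k, q k) with hN
  set A : ℕ → ℝ := fun j => ‖α j i0‖ ^ (2 * m i0) with hAdef
  have hA : ∀ j, 0 < A j := fun j => pow_pos (norm_pos_iff.mpr (hα j i0)) _
  have ha : ∀ j k, 0 < ‖α j k‖ := fun j k => norm_pos_iff.mpr (hα j k)
  -- A tends to 0
  have hA0 : Tendsto A atTop (nhds 0) := by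
    have h1 : Tendsto (fun j => α j i0) atTop (nhds 0) := by
      have := tendsto_pi_nhds.mp hα0 i0
      simpa using this
    have h2 : Tendsto (fun j => ‖α j i0‖) atTop (nhds 0) := by
      simpa using h1.norm
    have h3 := h2.pow (2 * m i0)
    have hne : 2 * m i0 ≠ 0 := by have := hm i0; omega
    simpa [hAdef, zero_pow hne] using h3
  set M : ℝ := C ^ d * (1 / c) ^ ((N : ℝ) / 2) with hM
  have hd1 : (0:ℝ) < d - 1 := by linarith
  apply squeeze_zero'
  · filter_upwards with j
    have := hε j
    have hprod : 0 ≤ ∏ k, (‖α j k‖ ^ ((K k - p k) + (L k - q k)) *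
        (‖α j k‖ *
          (ε j / ‖α j k‖ ^ (2 * m k)) ^ ((1 : ℝ) / 2)) ^ (p k + q k)) := by
      apply Finset.prod_nonneg
      intro k _
      positivity
    positivity
  · -- eventual bound by M * A j ^ (d - 1)
    have hev : ∀ᶠ j in atTop, ε j / A j ≤ 1 :=
      hratio.eventually (eventually_le_nhds (by norm_num : (0:ℝ) < 1))
    filter_upwards [hev] with j hδ1
    have hAj := hA j
    have heps := hε j
    have hδpos : 0 < ε j / A j := div_pos heps hAj
    -- bound the product
    have hbound : (∏ k, (‖α j k‖ ^ ((K k - p k) + (L k - q k)) *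
        (‖α j k‖ *
          (ε j / ‖α j k‖ ^ (2 * m k)) ^ ((1 : ℝ) / 2)) ^ (p k + q k)))
        ≤ (C * A j) ^ d * (ε j / A j / c) ^ ((N : ℝ) / 2) := by
      have step : ∀ k ∈ Finset.univ, (‖α j k‖ ^ ((K k - p k) + (L k - q k)) *
          (‖α j k‖ *
            (ε j / ‖α j k‖ ^ (2 * m k)) ^ ((1 : ℝ) / 2)) ^ (p k + q k))
          ≤ (C * A j) ^ ((K k + L k : ℝ) / (2 * m k)) * (ε j / A j / c) ^ ((p k + q k : ℝ) / 2) :=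
        fun k _ => factor_le (ha j k) hAj heps hc hC (hm k) (hp k) (hq k)
          (hcomp j k).1 (hcomp j k).2
      calc (∏ k, (‖α j k‖ ^ ((K k - p k) + (L k - q k)) *
          (‖α j k‖ *
            (ε j / ‖α j k‖ ^ (2 * m k)) ^ ((1 : ℝ) / 2)) ^ (p k + q k)))
          ≤ ∏ k, ((C * A j) ^ ((K k + L k : ℝ) / (2 * m k)) * (ε j / A j / c) ^ ((p k + q k : ℝ) / 2)) := by
            apply Finset.prod_le_prod (fun k _ => by positivity) step
        _ = (C * A j) ^ d * (ε j / A j / c) ^ ((N : ℝ) / 2) := by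
            have hNsum : (∑ x, ((p x : ℝ) + (q x : ℝ)) / 2) = (N : ℝ) / 2 := by
              rw [hN]
              push_cast
              rw [← Finset.sum_div, Finset.sum_add_distrib]
            rw [Finset.prod_mul_distrib, ← Real.rpow_sum_of_pos (by positivity),
              ← Real.rpow_sum_of_pos (by positivity : (0:ℝ) < ε j / A j / c),
              hNsum, ← hd]
    -- finish : ε⁻¹ * ((C A)^d (δ/c)^{N/2}) ≤ M * A^{d-1}
    have key : (ε j)⁻¹ * ((C * A j) ^ d * (ε j / A j / c) ^ ((N : ℝ) / 2))
        ≤ M * A j ^ (d - 1) := by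
      rw [Real.mul_rpow hC.le hAj.le, Real.div_rpow (by positivity) hc.le, hM]
      have h2N : (2:ℝ) ≤ (N:ℝ) := by exact_mod_cast hpq
      have hδN : (ε j / A j) ^ ((N : ℝ) / 2) ≤ ε j / A j := by
        calc (ε j / A j) ^ ((N : ℝ) / 2) ≤ (ε j / A j) ^ (1:ℝ) :=
            Real.rpow_le_rpow_of_exponent_ge hδpos hδ1 (by linarith)
          _ = ε j / A j := Real.rpow_one _
      have hAd : A j ^ d = A j ^ (d - 1) * A j := by
        have h := Real.rpow_add hAj (d - 1) 1
        rw [Real.rpow_one, show d - 1 + 1 = d from by ring] at h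
        exact h
      have hrw : (ε j)⁻¹ * (C ^ d * A j ^ d * ((ε j / A j) ^ ((N:ℝ)/2) / c ^ ((N:ℝ)/2)))
          ≤ (ε j)⁻¹ * (C ^ d * A j ^ d * ((ε j / A j) / c ^ ((N:ℝ)/2))) := by
        apply mul_le_mul_of_nonneg_left _ (by positivity)
        apply mul_le_mul_of_nonneg_left _ (by positivity)
        exact div_le_div_of_nonneg_right hδN (by positivity) |>.trans_eq rfl
      refine hrw.trans (le_of_eq ?_)
      have h1 : ε j ≠ 0 := heps.ne'
      have h2 : A j ≠ 0 := hAj.ne'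
      have h3 : c ^ ((N:ℝ)/2) ≠ 0 := (Real.rpow_pos_of_pos hc _).ne'
      rw [hAd, one_div, Real.inv_rpow hc.le]
      field_simp
    have hmono : (ε j)⁻¹ * ∏ k, (‖α j k‖ ^ ((K k - p k) + (L k - q k)) *
        (‖α j k‖ *
          (ε j / ‖α j k‖ ^ (2 * m k)) ^ ((1 : ℝ) / 2)) ^ (p k + q k))
        ≤ (ε j)⁻¹ * ((C * A j) ^ d * (ε j / A j / c) ^ ((N : ℝ) / 2)) :=
      mul_le_mul_of_nonneg_left hbound (by positivity)
    exact hmono.trans key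
  · -- M * A^{d-1} → 0
    have := (hA0.rpow_const (Or.inr hd1.le)).const_mul M
    simpa [Real.zero_rpow hd1.ne'] using this
end

section
/- For all complex numbers z₁, z₂, w₁, w₂ one has the identity (4|z₁|² + |z₂|⁴)·|w₁|² + 4|z₂|²·Re( conj(z₁)·z₂·w₁·conj(w₂) ) + (16|z₂|⁶ + 4|z₁|²|z₂|²)·|w₂|² = 4|z₁|²·|w₁|² + 16|z₂|⁶·|w₂|² + |z₂|²·|z₂·w₁ + 2·z₁·w₂|²; in particular the left-hand side is at least 4|z₁|²·|w₁|² + 16|z₂|⁶·|w₂|². -/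
/-- Example 3.1: the Levi form of `P(z₁,z₂) = |z₁|⁴ + |z₁|²|z₂|⁴ + |z₂|⁸` applied to
`w = (w₁,w₂)` equals `4|z₁|²|w₁|² + 16|z₂|⁶|w₂|² + |z₂|²|z₂w₁ + 2z₁w₂|²`, hence dominates
the Levi form of `σ(z₁,z₂) = |z₁|⁴ + |z₂|⁸`. -/
theorem levi_form_E124_identity (z₁ z₂ w₁ w₂ : ℂ) :
    ((4 * ‖z₁‖ ^ 2 + ‖z₂‖ ^ 4) * ‖w₁‖ ^ 2 +
        4 * ‖z₂‖ ^ 2 *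
          ((starRingEnd ℂ) z₁ * z₂ * w₁ * (starRingEnd ℂ) w₂).re +
        (16 * ‖z₂‖ ^ 6 + 4 * ‖z₁‖ ^ 2 * ‖z₂‖ ^ 2) *
          ‖w₂‖ ^ 2 =
      4 * ‖z₁‖ ^ 2 * ‖w₁‖ ^ 2 +
        16 * ‖z₂‖ ^ 6 * ‖w₂‖ ^ 2 +
        ‖z₂‖ ^ 2 * ‖z₂ * w₁ + 2 * z₁ * w₂‖ ^ 2) ∧
    4 * ‖z₁‖ ^ 2 * ‖w₁‖ ^ 2 +
        16 * ‖z₂‖ ^ 6 * ‖w₂‖ ^ 2 ≤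
      (4 * ‖z₁‖ ^ 2 + ‖z₂‖ ^ 4) * ‖w₁‖ ^ 2 +
        4 * ‖z₂‖ ^ 2 *
          ((starRingEnd ℂ) z₁ * z₂ * w₁ * (starRingEnd ℂ) w₂).re +
        (16 * ‖z₂‖ ^ 6 + 4 * ‖z₁‖ ^ 2 * ‖z₂‖ ^ 2) *
          ‖w₂‖ ^ 2 := by
  have h : (4 * ‖z₁‖ ^ 2 + ‖z₂‖ ^ 4) * ‖w₁‖ ^ 2 +
        4 * ‖z₂‖ ^ 2 *
          ((starRingEnd ℂ) z₁ * z₂ * w₁ * (starRingEnd ℂ) w₂).re +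
        (16 * ‖z₂‖ ^ 6 + 4 * ‖z₁‖ ^ 2 * ‖z₂‖ ^ 2) *
          ‖w₂‖ ^ 2 =
      4 * ‖z₁‖ ^ 2 * ‖w₁‖ ^ 2 +
        16 * ‖z₂‖ ^ 6 * ‖w₂‖ ^ 2 +
        ‖z₂‖ ^ 2 * ‖z₂ * w₁ + 2 * z₁ * w₂‖ ^ 2 := by
    have e : ∀ u : ℂ, ‖u‖ ^ 2 = Complex.normSq u := fun u => Complex.sq_norm u
    have e4 : ∀ u : ℂ, ‖u‖ ^ 4 = Complex.normSq u ^ 2 := by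
      intro u; rw [show (4:ℕ) = 2*2 from rfl, pow_mul, e]
    have e6 : ∀ u : ℂ, ‖u‖ ^ 6 = Complex.normSq u ^ 3 := by
      intro u; rw [show (6:ℕ) = 2*3 from rfl, pow_mul, e]
    simp only [e, e4, e6, Complex.normSq_apply, Complex.mul_re, Complex.mul_im,
      Complex.add_re, Complex.add_im, Complex.conj_re, Complex.conj_im,
      Complex.re_ofNat, Complex.im_ofNat]
    ring
  refine ⟨h, ?_⟩
  nlinarith [sq_nonneg (‖z₂‖), sq_nonneg (‖z₂ * w₁ + 2 * z₁ * w₂‖),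
    mul_nonneg (sq_nonneg (‖z₂‖)) (sq_nonneg (‖z₂ * w₁ + 2 * z₁ * w₂‖))]
end

section
/- Define ρ : ℂ³ → ℝ by ρ(z₁, z₂, w) = Re(w) + |z₁|⁴ + |z₁|²|z₂|⁴ + |z₂|⁸. Then for every fixed (z̃₁, z̃₂, w̃) ∈ ℂ³, as the integer j tends to infinity, j² · ρ( j^(−1/4) + z̃₁/(2·j^(3/4)), j^(−3/8)·(1 + z̃₂), −1/j − 1/j² − 1/j³ + w̃/j² − 2·z̃₁/j^(3/2) − z̃₁²/(2·j²) ) converges to Re(w̃) + |z̃₁|² + |1 + z̃₂|⁴ − 1. -/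
set_option maxHeartbeats 4000000


/-- Example 3.1 scaling computation: for `ρ(z₁,z₂,w) = Re(w) + |z₁|⁴ + |z₁|²|z₂|⁴ + |z₂|⁸`,
along the scaling sequence the rescaled defining functions converge pointwise to the
defining function of the model `Re(w̃) + |z̃₁|² + (|1 + z̃₂|⁴ - 1)`. -/
theorem rho_E124_scaling_limit (ρ : ℂ → ℂ → ℂ → ℝ)
    (hρ : ∀ z₁ z₂ w : ℂ, ρ z₁ z₂ w =
      w.re + ‖z₁‖ ^ 4 + ‖z₁‖ ^ 2 * ‖z₂‖ ^ 4 +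
        ‖z₂‖ ^ 8)
    (z₁ z₂ w : ℂ) :
    Filter.Tendsto (fun j : ℕ =>
        (j : ℝ) ^ 2 *
          ρ ((((j : ℝ) ^ (-(1 : ℝ) / 4) : ℝ) : ℂ) +
               z₁ / (2 * (((j : ℝ) ^ ((3 : ℝ) / 4) : ℝ) : ℂ)))
            ((((j : ℝ) ^ (-(3 : ℝ) / 8) : ℝ) : ℂ) * (1 + z₂))
            (-1 / (j : ℂ) - 1 / (j : ℂ) ^ 2 - 1 / (j : ℂ) ^ 3 + w / (j : ℂ) ^ 2 -
              2 * z₁ / (((j : ℝ) ^ ((3 : ℝ) / 2) : ℝ) : ℂ) - z₁ ^ 2 / (2 * (j : ℂ) ^ 2)))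
      Filter.atTop
      (nhds (w.re + ‖z₁‖ ^ 2 + ‖1 + z₂‖ ^ 4 - 1)) := by
  set T : ℝ := w.re + ‖z₁‖ ^ 2 + ‖1 + z₂‖ ^ 4 - 1 with hT
  set A : ℝ := z₁.re * (‖z₁‖ ^ 2 / 2 + ‖1 + z₂‖ ^ 4) with hA
  set B : ℝ := -1 + ‖z₁‖ ^ 4 / 16 +
      ‖z₁‖ ^ 2 * ‖1 + z₂‖ ^ 4 / 4 + ‖1 + z₂‖ ^ 8 with hB
  have hq : Filter.Tendsto (fun j : ℕ => (j : ℝ) ^ (-(1 : ℝ) / 2)) Filter.atTop (nhds 0) := by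
    have h := (tendsto_rpow_neg_atTop (by norm_num : (0:ℝ) < 1/2)).comp
      tendsto_natCast_atTop_atTop
    simpa [Function.comp_def, neg_div] using h
  have hlim : Filter.Tendsto
      (fun j : ℕ => T + (j : ℝ) ^ (-(1 : ℝ) / 2) * A + ((j : ℝ) ^ (-(1 : ℝ) / 2)) ^ 2 * B)
      Filter.atTop (nhds T) := by
    have h := (tendsto_const_nhds (x := T) (f := Filter.atTop (α := ℕ))).add
      ((hq.mul_const A).add ((hq.pow 2).mul_const B))
    simpa [add_assoc] using h
  refine Filter.Tendsto.congr' ?_ hlim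
  filter_upwards [Filter.eventually_ge_atTop 1] with j hj
  have hr1 : (1 : ℝ) ≤ (j : ℝ) := by exact_mod_cast hj
  have hr0 : (0 : ℝ) < (j : ℝ) := lt_of_lt_of_le one_pos hr1
  set r : ℝ := (j : ℝ) with hrdef
  set p : ℝ := r ^ ((1 : ℝ) / 8) with hpdef
  have hp0 : 0 < p := Real.rpow_pos_of_pos hr0 _
  have hp0' : p ≠ 0 := ne_of_gt hp0
  have hP : ∀ m : ℤ, r ^ ((m : ℝ) / 8) = p ^ m := by
    intro m
    rw [show ((m : ℝ)) / 8 = (1 / 8 : ℝ) * (m : ℝ) by ring, Real.rpow_mul hr0.le,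
      Real.rpow_intCast]
  have h14 : r ^ (-(1 : ℝ) / 4) = (p ^ (2 : ℕ))⁻¹ := by
    rw [show (-(1 : ℝ) / 4) = ((-2 : ℤ) : ℝ) / 8 by norm_num, hP (-2)]
    rw [show (-2 : ℤ) = -(2 : ℕ) by norm_num, zpow_neg, zpow_natCast]
  have h34 : r ^ ((3 : ℝ) / 4) = p ^ (6 : ℕ) := by
    rw [show ((3 : ℝ) / 4) = ((6 : ℤ) : ℝ) / 8 by norm_num, hP 6]
    norm_cast
  have h38 : r ^ (-(3 : ℝ) / 8) = (p ^ (3 : ℕ))⁻¹ := by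
    rw [show (-(3 : ℝ) / 8) = ((-3 : ℤ) : ℝ) / 8 by norm_num, hP (-3)]
    rw [show (-3 : ℤ) = -(3 : ℕ) by norm_num, zpow_neg, zpow_natCast]
  have h32 : r ^ ((3 : ℝ) / 2) = p ^ (12 : ℕ) := by
    rw [show ((3 : ℝ) / 2) = ((12 : ℤ) : ℝ) / 8 by norm_num, hP 12]
    norm_cast
  have h12 : r ^ (-(1 : ℝ) / 2) = (p ^ (4 : ℕ))⁻¹ := by
    rw [show (-(1 : ℝ) / 2) = ((-4 : ℤ) : ℝ) / 8 by norm_num, hP (-4)]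
    rw [show (-4 : ℤ) = -(4 : ℕ) by norm_num, zpow_neg, zpow_natCast]
  have hr8 : r = p ^ (8 : ℕ) := by
    have := hP 8
    rw [show (((8 : ℤ)) : ℝ) / 8 = (1 : ℝ) by norm_num, Real.rpow_one] at this
    rw [this]; norm_cast
  have hjC : (j : ℂ) = ((p ^ (8 : ℕ) : ℝ) : ℂ) := by
    rw [show ((j : ℕ) : ℂ) = (((j : ℝ)) : ℂ) by push_cast; ring, ← hrdef, hr8]
  rw [hρ]
  rw [h14, h34, h38, h32, h12, hjC, hr8]
  have habs2 : ∀ z : ℂ, ‖z‖ ^ 2 = z.re * z.re + z.im * z.im := by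
    intro z; rw [Complex.sq_norm, Complex.normSq_apply]
  have habs4 : ∀ z : ℂ, ‖z‖ ^ 4 = (z.re * z.re + z.im * z.im) ^ 2 := by
    intro z; rw [show (4 : ℕ) = 2 * 2 from rfl, pow_mul, habs2]
  have habs8 : ∀ z : ℂ, ‖z‖ ^ 8 = (z.re * z.re + z.im * z.im) ^ 4 := by
    intro z; rw [show (8 : ℕ) = 2 * 4 from rfl, pow_mul, habs2]
  rw [habs4, habs8, habs2, habs4, hT, hA, hB, habs2 z₁, habs4 z₁,
    habs4 (1 + z₂), habs8 (1 + z₂)]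
  simp only [← Complex.ofReal_ofNat, ← Complex.ofReal_pow, ← Complex.ofReal_inv,
    ← Complex.ofReal_mul, pow_two z₁]
  simp only [Complex.div_ofReal_re, Complex.div_ofReal_im, Complex.add_re, Complex.add_im,
    Complex.sub_re, Complex.sub_im, Complex.mul_re, Complex.mul_im, Complex.neg_re,
    Complex.neg_im, Complex.one_re, Complex.one_im, Complex.ofReal_re, Complex.ofReal_im]
  field_simp
  ring
end

section
/- Define ρ : ℂ² → ℝ by ρ(z, w) = Re(w) + |z|⁸ − (16/7)·|z|²·Re(z⁶). Then for every fixed (z̃, w̃) ∈ ℂ², as the integer j tends to infinity, j² · ρ( j^(−1/8) + j^(−3/8)·z̃, w̃/j² + 9/(7j) + (72/7)·j^(−5/4)·z̃ + 36·j^(−3/2)·z̃² + 72·j^(−7/4)·z̃³ + 78·j^(−2)·z̃⁴ ) converges to Re(w̃) + 36·|z̃|⁴ − 48·|z̃|²·Re(z̃²). -/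
set_option maxHeartbeats 2000000 in
/-- Example 5.4 scaling computation: for `ρ(z,w) = Re(w) + |z|⁸ - (16/7)|z|²Re(z⁶)`,
along the scaling sequence `η_j = (j^(-1/8), 9/(7j) - 1/j²)` with `ε_j = 1/j²` and
`τ_j = j^(-3/8)`, the rescaled defining functions converge pointwise to the defining
function of the model `Re(w̃) + 36|z̃|⁴ - 48|z̃|²Re(z̃²)`. -/
theorem rho_KN_scaling_limit (ρ : ℂ → ℂ → ℝ)
    (hρ : ∀ z w : ℂ, ρ z w =
      w.re + ‖z‖ ^ 8 - (16 / 7) * ‖z‖ ^ 2 * (z ^ 6).re)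
    (z w : ℂ) :
    Filter.Tendsto (fun j : ℕ =>
        (j : ℝ) ^ 2 *
          ρ ((((j : ℝ) ^ (-(1 : ℝ) / 8) : ℝ) : ℂ) +
               (((j : ℝ) ^ (-(3 : ℝ) / 8) : ℝ) : ℂ) * z)
            (w / (j : ℂ) ^ 2 + 9 / (7 * (j : ℂ)) +
              (72 / 7) * (((j : ℝ) ^ (-(5 : ℝ) / 4) : ℝ) : ℂ) * z +
              36 * (((j : ℝ) ^ (-(3 : ℝ) / 2) : ℝ) : ℂ) * z ^ 2 +
              72 * (((j : ℝ) ^ (-(7 : ℝ) / 4) : ℝ) : ℂ) * z ^ 3 +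
              78 * (((j : ℝ) ^ (-(2 : ℝ)) : ℝ) : ℂ) * z ^ 4))
      Filter.atTop
      (nhds (w.re + 36 * ‖z‖ ^ 4 - 48 * ‖z‖ ^ 2 * (z ^ 2).re)) := by
  set L : ℝ := w.re + 36 * ‖z‖ ^ 4 - 48 * ‖z‖ ^ 2 * (z ^ 2).re with hL
  set p : ℝ := z.re
  set q : ℝ := z.im
  set G : ℝ → ℝ := fun x => L
    + x ^ 2 * (24 * p * q ^ 4 + 720 * p ^ 3 * q ^ 2 - 72 * p ^ 5)
    + x ^ 4 * (-28 * q ^ 6 + 36 * p ^ 2 * q ^ 4 + 540 * p ^ 4 * q ^ 2 - 36 * p ^ 6)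
    + x ^ 6 * (-56 * p * q ^ 6 + 24 * p ^ 3 * q ^ 4 + 216 * p ^ 5 * q ^ 2
        - (72 / 7) * p ^ 7)
    + x ^ 8 * ((23 / 7) * q ^ 8 - 28 * p ^ 2 * q ^ 6 + 6 * p ^ 4 * q ^ 4
        + 36 * p ^ 6 * q ^ 2 - (9 / 7) * p ^ 8) with hGdef
  have htend : Filter.Tendsto (fun j : ℕ => ((j : ℝ)) ^ (-(1 : ℝ) / 8))
      Filter.atTop (nhds 0) := by
    have h := (tendsto_rpow_neg_atTop (y := (1 : ℝ) / 8) (by norm_num)).comp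
      (tendsto_natCast_atTop_atTop (R := ℝ))
    simpa [Function.comp_def, neg_div] using h
  have hGcont : Continuous G := by fun_prop
  have hG0 : G 0 = L := by simp [hGdef]
  have h1 : Filter.Tendsto (fun j : ℕ => G ((j : ℝ) ^ (-(1 : ℝ) / 8)))
      Filter.atTop (nhds L) := by
    rw [← hG0]
    exact (hGcont.tendsto 0).comp htend
  refine h1.congr' ?_
  filter_upwards [Filter.eventually_ge_atTop 1] with j hj
  have hj0 : (0 : ℝ) < (j : ℝ) := by exact_mod_cast hj
  set x : ℝ := (j : ℝ) ^ (-(1 : ℝ) / 8) with hxdef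
  have hx : 0 < x := Real.rpow_pos_of_pos hj0 _
  have key : ∀ n : ℕ, x ^ n = (j : ℝ) ^ (-(n : ℝ) / 8) := by
    intro n
    rw [hxdef, ← Real.rpow_natCast ((j : ℝ) ^ (-(1 : ℝ) / 8)) n,
      ← Real.rpow_mul hj0.le]
    congr 1
    ring
  have h38 : (j : ℝ) ^ (-(3 : ℝ) / 8) = x ^ 3 := by rw [key 3]; norm_num
  have h54 : (j : ℝ) ^ (-(5 : ℝ) / 4) = x ^ 10 := by rw [key 10]; norm_num
  have h32 : (j : ℝ) ^ (-(3 : ℝ) / 2) = x ^ 12 := by rw [key 12]; norm_num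
  have h74 : (j : ℝ) ^ (-(7 : ℝ) / 4) = x ^ 14 := by rw [key 14]; norm_num
  have h2 : (j : ℝ) ^ (-(2 : ℝ)) = x ^ 16 := by rw [key 16]; norm_num
  have h8 : x ^ 8 = (j : ℝ)⁻¹ := by
    rw [key 8]
    norm_num [Real.rpow_neg_one]
  have hjx : (j : ℝ) = (x ^ 8)⁻¹ := by rw [h8, inv_inv]
  have hjC : ((j : ℕ) : ℂ) = (((x ^ 8)⁻¹ : ℝ) : ℂ) := by
    rw [← hjx]; push_cast; ring
  have habs8 : ∀ v : ℂ, ‖v‖ ^ 8 = Complex.normSq v ^ 4 := by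
    intro v
    rw [show (8 : ℕ) = 2 * 4 from rfl, pow_mul, Complex.sq_norm]
  have habs4 : ‖z‖ ^ 4 = Complex.normSq z ^ 2 := by
    rw [show (4 : ℕ) = 2 * 2 from rfl, pow_mul, Complex.sq_norm]
  have habs2 : ∀ v : ℂ, ‖v‖ ^ 2 = Complex.normSq v := Complex.sq_norm
  simp only [hρ, h38, h54, h32, h74, h2]
  simp only [hjC, hjx, habs8, habs4, habs2, hL, hGdef]
  simp only [Complex.normSq_apply, Complex.div_re, Complex.add_re, Complex.add_im,
    Complex.mul_re, Complex.mul_im, Complex.ofReal_re, Complex.ofReal_im,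
    Complex.normSq_apply, pow_succ, pow_zero, one_mul, Complex.one_re, Complex.one_im,
    Complex.re_ofNat, Complex.im_ofNat, Complex.div_im]
  have hx16 : x ^ 16 ≠ 0 := by positivity
  field_simp
  ring
end
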